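/- The optimal (m+1)-seed frequency of a string R of length L satisfies the recurrence Opt(R, m+1) = min over dividers i (with m ≤ i - 1 and i ≤ L) of Opt(R[0, i), m) + Opt(R[i, L), 1), where Opt(u, 1) is the minimum of f over all nonempty contiguous substrings of u. -/

import Mathlib

/-- A placement of seeds in a string `u`: a list of intervals `(a, b)` denoting positions
`[a, b)`, each nonempty, within bounds, pairwise disjoint and in order. -/
def ValidPlacement {α : Type*} (u : List α) (ivs : List (ℕ × ℕ)) : Prop :=
  (∀ p ∈ ivs, p.1 < p.2 ∧ p.2 ≤ u.length) ∧ ivs.Chain' (fun p q => p.2 ≤ q.1)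

/-- The total frequency (cost) of a placement: the sum of `f` over the substrings of `u`
cut out by the intervals. -/
def cost {α : Type*} (f : List α → ℕ) (u : List α) (ivs : List (ℕ × ℕ)) : ℕ :=
  (ivs.map fun p => f ((u.drop p.1).take (p.2 - p.1))).sum

/-- `Opt f u m`: the optimal (minimum) total cost over all placements of `m` seeds in `u`. -/
noncomputable def Opt {α : Type*} (f : List α → ℕ) (u : List α) (m : ℕ) : ℕ :=
  sInf {c | ∃ ivs, ivs.length = m ∧ ValidPlacement u ivs ∧ c = cost f u ivs}

/-- `Opt1 f u`: the minimum of `f` over all nonempty contiguous substrings of `u`. -/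
noncomputable def Opt1 {α : Type*} (f : List α → ℕ) (u : List α) : ℕ :=
  sInf {c | ∃ a b : ℕ, a < b ∧ b ≤ u.length ∧ c = f ((u.drop a).take (b - a))}

/-!
Cut a placement of `m + 1` seeds at the start `a` of its last seed: the first `m` seeds are a
placement in the prefix `R[0, a)`, which forces `m ≤ a`, and the last seed lies in `R[a, L)`.
Conversely, `m` seeds in `R[0, i)` followed by one seed in `R[i, L)` form a placement of `m + 1`
seeds in `R`. So every cost on either side is dominated by one on the other, and the two infima
agree (also when both sets are empty and `sInf` returns `0`).
-/

open List

theorem List.IsChain.pairwise_snd_le_fst {ivs : List (ℕ × ℕ)} (hne : ∀ p ∈ ivs, p.1 < p.2)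
    (h : ivs.IsChain (fun p q => p.2 ≤ q.1)) : ivs.Pairwise (fun p q => p.2 ≤ q.1) := by
  induction ivs with
  | nil => exact .nil
  | cons p l ih =>
    have hl : l.Pairwise (fun p q => p.2 ≤ q.1) :=
      ih (fun q hq => hne q (mem_cons_of_mem p hq)) h.tail
    refine pairwise_cons.2 ⟨?_, hl⟩
    cases l with
    | nil => simp
    | cons q l =>
      have hpq : p.2 ≤ q.1 := (isChain_cons_cons.1 h).1
      have hq : q.1 < q.2 := hne q (by simp)
      intro r hr
      rcases mem_cons.1 hr with rfl | hr
      · exact hpq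
      · have := rel_of_pairwise_cons hl hr
        omega

section Placement

variable {α : Type*} (f : List α → ℕ) {u v : List α} {ivs : List (ℕ × ℕ)} {a b m : ℕ}

theorem ValidPlacement.mono (hv : ValidPlacement u ivs) (h : u.length ≤ v.length) :
    ValidPlacement v ivs :=
  ⟨fun p hp => ⟨(hv.1 p hp).1, (hv.1 p hp).2.trans h⟩, hv.2⟩

theorem validPlacement_concat_iff :
    ValidPlacement u (ivs ++ [(a, b)]) ↔
      ValidPlacement (u.take a) ivs ∧ a < b ∧ b ≤ u.length := by
  constructor
  · rintro ⟨hbound, hchain⟩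
    have hle : ∀ p ∈ ivs, p.2 ≤ a := fun p hp =>
      (pairwise_append.1 (hchain.pairwise_snd_le_fst fun q hq => (hbound q hq).1)).2.2
        p hp (a, b) (mem_singleton_self _)
    refine ⟨⟨fun p hp => ?_, (isChain_append.1 hchain).1⟩, hbound (a, b) (by simp)⟩
    obtain ⟨hp₁, hp₂⟩ := hbound p (mem_append_left _ hp)
    exact ⟨hp₁, length_take ▸ le_min (hle p hp) hp₂⟩
  · rintro ⟨⟨hbound, hchain⟩, hab, hb⟩
    refine ⟨fun p hp => ?_, isChain_append.2 ⟨hchain, isChain_singleton _, ?_⟩⟩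
    · rcases mem_append.1 hp with hp | hp
      · have := hbound p hp
        rw [length_take] at this
        omega
      · rw [mem_singleton.1 hp]
        exact ⟨hab, hb⟩
    · intro p hp q hq
      rw [head?_cons, Option.mem_some_iff] at hq
      subst hq
      have := (hbound p (mem_of_mem_getLast? hp)).2
      rw [length_take] at this
      omega

theorem ValidPlacement.length_le (hv : ValidPlacement u ivs) : ivs.length ≤ u.length := by
  induction ivs using List.reverseRecOn generalizing u with
  | nil => exact Nat.zero_le _
  | append_singleton ivs p ih =>
    obtain ⟨hv', hab, hb⟩ := validPlacement_concat_iff.1 hv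
    have := ih hv'
    simp only [length_append, length_singleton, length_take] at this ⊢
    omega

theorem exists_validPlacement (h : m ≤ u.length) :
    ∃ ivs, ivs.length = m ∧ ValidPlacement u ivs := by
  induction m generalizing u with
  | zero => exact ⟨[], rfl, fun _ h => absurd h (not_mem_nil), isChain_nil⟩
  | succ m ih =>
    obtain ⟨ivs, hl, hv⟩ := ih (u := u.take m) (by rw [length_take]; omega)
    exact ⟨ivs ++ [(m, m + 1)], by simp [hl], validPlacement_concat_iff.2 ⟨hv, by omega, h⟩⟩

theorem cost_concat :
    cost f u (ivs ++ [(a, b)]) = cost f u ivs + f ((u.drop a).take (b - a)) := by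
  simp [cost]

theorem ValidPlacement.cost_take {i : ℕ} (hv : ValidPlacement (u.take i) ivs) :
    cost f (u.take i) ivs = cost f u ivs := by
  refine congrArg sum (map_congr_left fun p hp => ?_)
  have := (hv.1 p hp).2
  rw [length_take] at this
  rw [drop_take, take_take, min_eq_left (by omega)]

theorem opt_le_cost (hl : ivs.length = m) (hv : ValidPlacement u ivs) :
    Opt f u m ≤ cost f u ivs :=
  Nat.sInf_le ⟨ivs, hl, hv, rfl⟩

theorem exists_cost_eq_opt (h : m ≤ u.length) :
    ∃ ivs, ivs.length = m ∧ ValidPlacement u ivs ∧ cost f u ivs = Opt f u m := by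
  obtain ⟨ivs, hl, hv⟩ := exists_validPlacement h
  have hmem : Opt f u m ∈
      {c | ∃ ivs, ivs.length = m ∧ ValidPlacement u ivs ∧ c = cost f u ivs} :=
    Nat.sInf_mem ⟨_, ivs, hl, hv, rfl⟩
  obtain ⟨ivs, hl, hv, hc⟩ := hmem
  exact ⟨ivs, hl, hv, hc.symm⟩

theorem opt1_le (hab : a < b) (hb : b ≤ u.length) :
    Opt1 f u ≤ f ((u.drop a).take (b - a)) :=
  Nat.sInf_le ⟨a, b, hab, hb, rfl⟩

theorem exists_eq_opt1 (h : 0 < u.length) :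
    ∃ a b, a < b ∧ b ≤ u.length ∧ f ((u.drop a).take (b - a)) = Opt1 f u := by
  have hmem : Opt1 f u ∈
      {c | ∃ a b, a < b ∧ b ≤ u.length ∧ c = f ((u.drop a).take (b - a))} :=
    Nat.sInf_mem ⟨_, 0, 1, Nat.one_pos, h, rfl⟩
  obtain ⟨a, b, hab, hb, hc⟩ := hmem
  exact ⟨a, b, hab, hb, hc.symm⟩

theorem exists_divider_le_cost (hl : ivs.length = m + 1) (hv : ValidPlacement u ivs) :
    ∃ i, m ≤ i ∧ i < u.length ∧ Opt f (u.take i) m + Opt1 f (u.drop i) ≤ cost f u ivs := by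
  obtain ⟨ivs, ⟨a, b⟩, rfl⟩ := (eq_nil_or_concat' ivs).resolve_left (by rintro rfl; simp at hl)
  rw [length_append, length_singleton, Nat.add_right_cancel_iff] at hl
  obtain ⟨hv, hab, hb⟩ := validPlacement_concat_iff.1 hv
  have hma : m ≤ a := hl ▸ hv.length_le.trans (length_take_le _ _)
  have hlast : Opt1 f (u.drop a) ≤ f ((u.drop a).take (b - a)) := by
    simpa using opt1_le f (u := u.drop a) (a := 0) (b := b - a) (by omega) (by simp; omega)
  refine ⟨a, hma, by omega, ?_⟩
  rw [cost_concat, ← hv.cost_take]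
  exact Nat.add_le_add (opt_le_cost f hl hv) hlast

theorem exists_cost_eq_of_divider {i : ℕ} (hmi : m ≤ i) (hi : i < u.length) :
    ∃ ivs, ivs.length = m + 1 ∧ ValidPlacement u ivs ∧
      cost f u ivs = Opt f (u.take i) m + Opt1 f (u.drop i) := by
  obtain ⟨ivs, hl, hv, hc⟩ :=
    exists_cost_eq_opt f (u := u.take i) (m := m) (by rw [length_take]; omega)
  obtain ⟨a, b, hab, hb, hc₁⟩ := exists_eq_opt1 f (u := u.drop i) (by rw [length_drop]; omega)
  rw [length_drop] at hb
  have hv' : ValidPlacement (u.take (i + a)) ivs := hv.mono (by simp only [length_take]; omega)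
  refine ⟨ivs ++ [(i + a, i + b)], by simp [hl],
    validPlacement_concat_iff.2 ⟨hv', by omega, by omega⟩, ?_⟩
  rw [cost_concat, ← hv.cost_take, hc, ← hc₁, drop_drop, Nat.add_sub_add_left]

end Placement

theorem opt_divider_recurrence_general {α : Type*} (f : List α → ℕ) (R : List α) (m : ℕ) :
    Opt f R (m + 1) =
      sInf {c | ∃ i, m ≤ i ∧ i < R.length ∧
        c = Opt f (R.take i) m + Opt1 f (R.drop i)} := by
  refine csInf_eq_csInf_of_forall_exists_le ?_ ?_
  · rintro _ ⟨ivs, hl, hv, rfl⟩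
    obtain ⟨i, hmi, hi, hle⟩ := exists_divider_le_cost f hl hv
    exact ⟨_, ⟨i, hmi, hi, rfl⟩, hle⟩
  · rintro _ ⟨i, hmi, hi, rfl⟩
    obtain ⟨ivs, hl, hv, hc⟩ := exists_cost_eq_of_divider f hmi hi
    exact ⟨_, ⟨ivs, hl, hv, rfl⟩, hc.le⟩

/-- The divider recurrence: for a read `R` of length `L` and `m ≥ 1` with `m + 1 ≤ L`,
the optimal `(m+1)`-seed frequency is the minimum, over dividers `i` (the left part
`R[0,i)` must host `m` seeds, so `m ≤ i`, and the right part `R[i,L)` must host one seed,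
so `i < L`), of `Opt(R[0,i), m) + Opt(R[i,L), 1)`. -/
theorem opt_divider_recurrence {α : Type*} (f : List α → ℕ) (R : List α) (m : ℕ)
    (hm : 1 ≤ m) (hL : m + 1 ≤ R.length) :
    Opt f R (m + 1) =
      sInf {c | ∃ i, m ≤ i ∧ i < R.length ∧
        c = Opt f (R.take i) m + Opt1 f (R.drop i)} :=
  opt_divider_recurrence_general f R m
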